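/- arXiv:1703.01955 — 2 statements merged into one kernel-verified Lean document; each statement's English description precedes it below -/
import Mathlib

section
/- For every prime p and every n ∈ ℕ, the polynomial congruence g_n(t) ≡ g_{n mod p}(t)·(t - t^p)^{⌊n/p⌋} holds modulo p, i.e. the images of the two sides in (ℤ/pℤ)[t] are equal. -/
/-!
Let `F = ∏ⱼ (1 - x^{2^j}) = ∑ₙ (-1)^{s₂(n)} xⁿ`. The recursion defining `g` is the coefficientwise
form of `x (F^t)' = t · (x F'/F) · F^t`, so `g n` evaluated at `m ∈ ℕ` is `n! [xⁿ] F^m`. Expanding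
`F^t = ∑ₖ (t choose k) (F - 1)^k` then identifies `g n` with
`∑ₖ (n!/k!) [xⁿ] (F - 1)^k · t (t - 1) ⋯ (t - k + 1)`.

Modulo `p`, write `n = q p + r` with `r < p`. The factor `n!/k!` kills every `k < q p`. For
`k = q p + b`, write `F - 1 = x V`; then `(F - 1)^k = x^{qp} (V^q)^p (F - 1)^b`, and `(V^q)^p` is a
power series in `x^p` with constant term `(-1)^q`, so `[x^{qp+r}] (F - 1)^k = (-1)^q [x^r] (F - 1)^b`.
Finally the falling factorial of length `q p + b` is `(t^p - t)^q` times the one of length `b`.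
-/

open Finset

/-- The polynomials `g_n ∈ ℤ[t]`: `g_0 = 1` and, for `n ≥ 1`,
`g_n(t) = t · ∑_{k=0}^{n-1} (1 - 2^{ν₂(n-k)+1}) · ((n-1)!/k!) · g_k(t)`. -/
noncomputable def g : ℕ → Polynomial ℤ
  | 0 => 1
  | n + 1 =>
      Polynomial.X *
        ∑ k ∈ (Finset.range (n + 1)).attach,
          Polynomial.C
              ((1 - 2 ^ (padicValNat 2 (n + 1 - k.1) + 1)) *
                ((n.factorial / k.1.factorial : ℕ) : ℤ)) *
            g k.1
  decreasing_by exact Finset.mem_range.mp k.2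

theorem Finset.sum_range_two_mul {M : Type*} [AddCommMonoid M] (f : ℕ → M) (n : ℕ) :
    ∑ i ∈ range (2 * n), f i = ∑ i ∈ range n, (f (2 * i) + f (2 * i + 1)) := by
  induction n with
  | zero => simp
  | succ n ih =>
    rw [mul_add, mul_one, sum_range_succ, sum_range_succ, sum_range_succ, ih, add_assoc]

namespace PowerSeries

theorem coeff_pow_of_lt {R : Type*} [CommSemiring R] {φ : R⟦X⟧} (hφ : constantCoeff φ = 0)
    {n k : ℕ} (h : n < k) : coeff n (φ ^ k) = 0 :=
  X_pow_dvd_iff.mp (pow_dvd_pow_of_dvd (X_dvd_iff.mpr hφ) k) n h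

theorem coeff_pow_char_of_not_dvd {R : Type*} [CommRing R] {p : ℕ} [ExpChar R p] (φ : R⟦X⟧)
    {m : ℕ} (h : ¬ p ∣ m) : coeff m (φ ^ p) = 0 := by
  rw [← MvPowerSeries.map_frobenius_expand p (expChar_ne_zero R p) (f := φ)]
  exact (coeff_map (frobenius R p) m (expand p (expChar_ne_zero R p) φ)).trans
    (by rw [coeff_expand_of_not_dvd p _ φ h, map_zero])

theorem coeff_mul_eq_constantCoeff_mul {R : Type*} [CommSemiring R] {W : R⟦X⟧} {r : ℕ}
    (hW : ∀ i, 0 < i → i ≤ r → coeff i W = 0) (ψ : R⟦X⟧) :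
    coeff r (W * ψ) = constantCoeff W * coeff r ψ := by
  rw [coeff_mul, sum_eq_single_of_mem (0, r) (by simp)]
  · simp
  · rintro ⟨i, j⟩ hij hne
    rw [HasAntidiagonal.mem_antidiagonal] at hij
    have hi : 0 < i := Nat.pos_of_ne_zero fun hi => hne (by subst hi; simp_all)
    rw [hW i hi (by omega), zero_mul]

theorem coeff_mul_add_pow_mul_add {p : ℕ} [Fact p.Prime] {φ : (ZMod p)⟦X⟧}
    (hφ : constantCoeff φ = 0) (q b : ℕ) {r : ℕ} (hr : r < p) :
    coeff (q * p + r) (φ ^ (q * p + b)) = coeff 1 φ ^ q * coeff r (φ ^ b) := by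
  obtain ⟨V, rfl⟩ := X_dvd_iff.mpr hφ
  have hsplit : (X * V) ^ (q * p + b) = X ^ (q * p) * ((V ^ q) ^ p * (X * V) ^ b) := by ring
  have hW : ∀ i, 0 < i → i ≤ r → coeff i ((V ^ q) ^ p) = 0 := fun i hi hir =>
    coeff_pow_char_of_not_dvd _ fun hdvd => by
      have := Nat.le_of_dvd hi hdvd
      omega
  rw [hsplit, coeff_X_pow_mul', if_pos (by omega), Nat.add_sub_cancel_left,
    coeff_mul_eq_constantCoeff_mul hW, coeff_succ_X_mul, coeff_zero_eq_constantCoeff_apply,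
    map_pow, map_pow, ZMod.pow_card]

end PowerSeries

section Pochhammer

open Polynomial

theorem natCast_descFactorial_mod (p n k : ℕ) :
    ((n % p).descFactorial k : ZMod p) = n.descFactorial k := by
  rw [← descPochhammer_eval_eq_descFactorial, ← descPochhammer_eval_eq_descFactorial,
    ZMod.natCast_mod]

theorem descPochhammer_zmod_mul_add (p q b : ℕ) :
    descPochhammer (ZMod p) (q * p + b) =
      descPochhammer (ZMod p) (q * p) * descPochhammer (ZMod p) b := by
  rw [← descPochhammer_mul]
  simp

variable {p : ℕ} [Fact p.Prime]

theorem descPochhammer_zmod_self : descPochhammer (ZMod p) p = X ^ p - X := by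
  have hp := (Fact.out : p.Prime).one_lt
  have hmonic : (X ^ p - X : (ZMod p)[X]).Monic :=
    monic_X_pow_sub (by rw [degree_X]; exact_mod_cast hp)
  have hdeg : (descPochhammer (ZMod p) p).degree = p := by
    rw [degree_eq_natDegree (monic_descPochhammer _ p).ne_zero, descPochhammer_natDegree]
  have hdeg' : (X ^ p - X : (ZMod p)[X]).degree = p := by
    rw [degree_eq_natDegree hmonic.ne_zero, FiniteField.X_pow_card_sub_X_natDegree_eq _ hp]
  refine eq_of_degree_sub_lt_of_eval_finset_eq univ ?_ fun a _ => ?_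
  · rw [card_univ, ZMod.card, ← hdeg]
    exact degree_sub_lt_left (hdeg.trans hdeg'.symm) (monic_descPochhammer _ p).ne_zero
      ((monic_descPochhammer _ p).leadingCoeff.trans hmonic.leadingCoeff.symm)
  · rw [← ZMod.natCast_zmod_val a, descPochhammer_eval_coe_nat_of_lt (ZMod.val_lt a)]
    simp [ZMod.pow_card]

theorem descPochhammer_zmod_mul_add_eq_pow_mul (q b : ℕ) :
    descPochhammer (ZMod p) (q * p + b) = (X ^ p - X) ^ q * descPochhammer (ZMod p) b := by
  rw [descPochhammer_zmod_mul_add]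
  congr 1
  induction q with
  | zero => simp
  | succ q ih =>
    rw [add_mul, one_mul, descPochhammer_zmod_mul_add, ih, descPochhammer_zmod_self, pow_succ]

end Pochhammer

section PowCoeffPoly

open Polynomial
open scoped Nat

/-- `n! [xⁿ] F^t` as a polynomial in `t`, through `F^t = ∑ₖ (t choose k) (F - 1)^k`;
`n.descFactorial (n - k) = n!/k!`. -/
noncomputable def powCoeffPoly (F : PowerSeries ℤ) (n : ℕ) : ℤ[X] :=
  ∑ k ∈ range (n + 1),
    C ((n.descFactorial (n - k) : ℤ) * PowerSeries.coeff n ((F - 1) ^ k)) * descPochhammer ℤ k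

theorem eval_powCoeffPoly {F : PowerSeries ℤ} (hF : PowerSeries.constantCoeff F = 1) (n m : ℕ) :
    (powCoeffPoly F n).eval (m : ℤ) = n ! * PowerSeries.coeff n (F ^ m) := by
  set f : ℕ → ℤ := fun k => m.choose k * PowerSeries.coeff n ((F - 1) ^ k) with hf
  have hsum (N : ℕ) (hN : min n m ≤ N) :
      ∑ k ∈ range (N + 1), f k = ∑ k ∈ range (min n m + 1), f k := by
    refine (sum_subset (range_subset_range.2 (by omega)) fun k _ hk => ?_).symm
    rw [mem_range, not_lt] at hk
    simp only [hf]
    rcases le_total n m with h | h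
    · rw [PowerSeries.coeff_pow_of_lt (by simp [hF]) (by omega), mul_zero]
    · rw [Nat.choose_eq_zero_of_lt (by omega), Nat.cast_zero, zero_mul]
  have hcoeff : PowerSeries.coeff n (F ^ m) = ∑ k ∈ range (m + 1), f k := by
    rw [← sub_add_cancel F 1, add_pow, map_sum]
    refine sum_congr rfl fun k _ => ?_
    rw [one_pow, mul_one, ← map_natCast (PowerSeries.C (R := ℤ)), PowerSeries.coeff_mul_C,
      mul_comm]
  have hterm (k : ℕ) (hk : k ∈ range (n + 1)) :
      (C ((n.descFactorial (n - k) : ℤ) * PowerSeries.coeff n ((F - 1) ^ k)) *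
        descPochhammer ℤ k).eval (m : ℤ) = n ! * f k := by
    have hk : k ≤ n := by simpa [Nat.lt_succ_iff] using hk
    have hfac : n.descFactorial (n - k) * k ! = n ! := by
      rw [mul_comm, ← Nat.factorial_mul_descFactorial (Nat.sub_le n k), Nat.sub_sub_self hk]
    rw [eval_mul, eval_C, descPochhammer_eval_eq_descFactorial,
      Nat.descFactorial_eq_factorial_mul_choose m k, hf, ← hfac]
    push_cast
    ring
  rw [powCoeffPoly, eval_finsetSum, sum_congr rfl hterm, ← mul_sum, hcoeff,
    hsum n (min_le_left _ _), hsum m (min_le_right _ _)]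

theorem map_powCoeffPoly {R : Type*} [CommRing R] (f : ℤ →+* R) (F : PowerSeries ℤ) (n : ℕ) :
    (powCoeffPoly F n).map f = ∑ k ∈ range (n + 1),
      C ((n.descFactorial (n - k) : R) * PowerSeries.coeff n ((PowerSeries.map f F - 1) ^ k)) *
        descPochhammer R k := by
  rw [powCoeffPoly, Polynomial.map_sum]
  refine sum_congr rfl fun k _ => ?_
  rw [Polynomial.map_mul, Polynomial.map_C, descPochhammer_map, ← map_one (PowerSeries.map f),
    ← map_sub, ← map_pow, PowerSeries.coeff_map, map_mul, map_natCast]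

theorem map_powCoeffPoly_mul_add {p : ℕ} [Fact p.Prime] {F : PowerSeries ℤ}
    (hF : PowerSeries.constantCoeff F = 1) (q : ℕ) {r : ℕ} (hr : r < p) :
    (powCoeffPoly F (q * p + r)).map (Int.castRingHom (ZMod p)) =
      (C ((PowerSeries.coeff 1 F : ℤ) : ZMod p) * (X ^ p - X)) ^ q *
        (powCoeffPoly F r).map (Int.castRingHom (ZMod p)) := by
  set u := PowerSeries.map (Int.castRingHom (ZMod p)) F - 1 with hu
  have hu0 : PowerSeries.constantCoeff u = 0 := by
    rw [hu, map_sub, map_one, ← PowerSeries.coeff_zero_eq_constantCoeff_apply,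
      PowerSeries.coeff_map, PowerSeries.coeff_zero_eq_constantCoeff_apply, hF, map_one, sub_self]
  have hu1 : PowerSeries.coeff 1 u = ((PowerSeries.coeff 1 F : ℤ) : ZMod p) := by simp [hu]
  have hmod : (q * p + r) % p = r := by rw [Nat.mul_add_mod_self_right, Nat.mod_eq_of_lt hr]
  rw [map_powCoeffPoly, map_powCoeffPoly, ← hu, show q * p + r + 1 = q * p + (r + 1) by ring,
    sum_range_add, mul_sum]
  have hlow (k : ℕ) (hk : k ∈ range (q * p)) :
      C (((q * p + r).descFactorial (q * p + r - k) : ZMod p) *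
        PowerSeries.coeff (q * p + r) (u ^ k)) * descPochhammer (ZMod p) k = 0 := by
    have hk := mem_range.mp hk
    rw [← natCast_descFactorial_mod, hmod, Nat.descFactorial_eq_zero_iff_lt.mpr (by omega),
      Nat.cast_zero, zero_mul, C_0, zero_mul]
  rw [sum_eq_zero hlow, zero_add]
  refine sum_congr rfl fun b hb => ?_
  rw [← natCast_descFactorial_mod, hmod, PowerSeries.coeff_mul_add_pow_mul_add hu0 q b hr, hu1,
    descPochhammer_zmod_mul_add_eq_pow_mul, show q * p + r - (q * p + b) = r - b by omega]
  simp only [mul_pow, C_mul, C_pow]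
  ring

end PowCoeffPoly

section ThueMorse

open PowerSeries

def thueMorseSign (n : ℕ) : ℤ := (-1) ^ (Nat.digits 2 n).sum

theorem thueMorseSign_zero : thueMorseSign 0 = 1 := rfl

theorem thueMorseSign_two_mul (k : ℕ) : thueMorseSign (2 * k) = thueMorseSign k := by
  rcases k.eq_zero_or_pos with rfl | hk
  · rfl
  · rw [thueMorseSign, Nat.digits_def' one_lt_two (by omega), thueMorseSign]
    simp

theorem thueMorseSign_two_mul_add_one (k : ℕ) :
    thueMorseSign (2 * k + 1) = -thueMorseSign k := by
  rw [thueMorseSign, Nat.digits_def' one_lt_two (by omega), thueMorseSign]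
  simp [Nat.mul_add_div, pow_add]

/-- `x F'/F = ∑ₘ dyadicWeight m · xᵐ` for `F = ∏ⱼ (1 - x^{2^j})`, since
`dyadicWeight m = -∑_{2^j ∣ m} 2^j`. -/
def dyadicWeight (m : ℕ) : ℤ := 1 - 2 ^ (padicValNat 2 m + 1)

theorem dyadicWeight_two_mul_add_one (k : ℕ) : dyadicWeight (2 * k + 1) = -1 := by
  simp [dyadicWeight, padicValNat.eq_zero_of_not_dvd (by omega : ¬ 2 ∣ 2 * k + 1)]

theorem dyadicWeight_two_mul {k : ℕ} (hk : k ≠ 0) :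
    dyadicWeight (2 * k) = 2 * dyadicWeight k - 1 := by
  rw [dyadicWeight, dyadicWeight, padicValNat.mul two_ne_zero hk, padicValNat.self one_lt_two]
  ring

theorem sum_dyadicWeight_mul_thueMorseSign (n : ℕ) :
    ∑ k ∈ range n, dyadicWeight (n - k) * thueMorseSign k = n * thueMorseSign n := by
  induction n using Nat.strong_induction_on with
  | _ n ih =>
  obtain ⟨N, rfl | rfl⟩ := n.even_or_odd'
  · have hpair (i : ℕ) (hi : i ∈ range N) :
        dyadicWeight (2 * N - 2 * i) * thueMorseSign (2 * i)
          + dyadicWeight (2 * N - (2 * i + 1)) * thueMorseSign (2 * i + 1)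
          = 2 * (dyadicWeight (N - i) * thueMorseSign i) := by
      have hi := mem_range.mp hi
      rw [← Nat.mul_sub, show 2 * N - (2 * i + 1) = 2 * (N - i - 1) + 1 by omega,
        dyadicWeight_two_mul (by omega), dyadicWeight_two_mul_add_one,
        thueMorseSign_two_mul_add_one, thueMorseSign_two_mul]
      ring
    rcases N.eq_zero_or_pos with rfl | hN
    · simp
    rw [sum_range_two_mul, sum_congr rfl hpair, ← mul_sum, ih N (by omega),
      thueMorseSign_two_mul]
    push_cast
    ring
  · have hpair (i : ℕ) (hi : i ∈ range N) :
        dyadicWeight (2 * N + 1 - 2 * i) * thueMorseSign (2 * i)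
          + dyadicWeight (2 * N + 1 - (2 * i + 1)) * thueMorseSign (2 * i + 1)
          = -2 * (dyadicWeight (N - i) * thueMorseSign i) := by
      have hi := mem_range.mp hi
      rw [show 2 * N + 1 - 2 * i = 2 * (N - i) + 1 by omega,
        show 2 * N + 1 - (2 * i + 1) = 2 * (N - i) by omega,
        dyadicWeight_two_mul (by omega), dyadicWeight_two_mul_add_one,
        thueMorseSign_two_mul_add_one, thueMorseSign_two_mul]
      ring
    rw [sum_range_succ, sum_range_two_mul, sum_congr rfl hpair, ← mul_sum, ih N (by omega),
      show 2 * N + 1 - 2 * N = 2 * 0 + 1 by omega, dyadicWeight_two_mul_add_one,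
      thueMorseSign_two_mul, thueMorseSign_two_mul_add_one]
    push_cast
    ring

/-- The expansion of `∏ⱼ (1 - x^{2^j})`. The product itself never appears: all that is used is its
logarithmic derivative, `X_mul_derivative_thueMorseSeries`. -/
def thueMorseSeries : ℤ⟦X⟧ := mk thueMorseSign

def dyadicWeightSeries : ℤ⟦X⟧ := mk fun m => if m = 0 then 0 else dyadicWeight m

theorem constantCoeff_thueMorseSeries : constantCoeff thueMorseSeries = 1 := by
  rw [← coeff_zero_eq_constantCoeff_apply, thueMorseSeries, coeff_mk, thueMorseSign_zero]

theorem coeff_one_thueMorseSeries : coeff 1 thueMorseSeries = -1 := by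
  simp [thueMorseSeries, thueMorseSign]

theorem coeff_dyadicWeightSeries_mul (φ : ℤ⟦X⟧) (n : ℕ) :
    coeff n (dyadicWeightSeries * φ) = ∑ k ∈ range n, dyadicWeight (n - k) * coeff k φ := by
  rw [mul_comm, coeff_mul,
    Nat.sum_antidiagonal_eq_sum_range_succ (fun i j => coeff i φ * coeff j dyadicWeightSeries),
    sum_range_succ]
  simp only [dyadicWeightSeries, coeff_mk, Nat.sub_self, if_pos, mul_zero, add_zero]
  refine sum_congr rfl fun k hk => ?_
  rw [if_neg (by have := mem_range.mp hk; omega), mul_comm]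

theorem X_mul_derivative_thueMorseSeries :
    X * d⁄dX ℤ thueMorseSeries = dyadicWeightSeries * thueMorseSeries := by
  ext n
  rw [coeff_dyadicWeightSeries_mul]
  simp only [thueMorseSeries, coeff_mk, sum_dyadicWeight_mul_thueMorseSign]
  rcases n with _ | n
  · simp
  · rw [coeff_succ_X_mul, coeff_derivative, coeff_mk]
    push_cast
    ring

theorem natCast_mul_coeff_pow_thueMorseSeries (m n : ℕ) :
    (n : ℤ) * coeff n (thueMorseSeries ^ m)
      = m * ∑ k ∈ range n, dyadicWeight (n - k) * coeff k (thueMorseSeries ^ m) := by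
  have hode : X * d⁄dX ℤ (thueMorseSeries ^ m)
      = (m : ℤ⟦X⟧) * (dyadicWeightSeries * thueMorseSeries ^ m) := by
    rcases m with _ | m
    · simp
    · rw [derivative_pow, Nat.add_sub_cancel]
      linear_combination
        ((m + 1 : ℕ) : ℤ⟦X⟧) * thueMorseSeries ^ m * X_mul_derivative_thueMorseSeries
  have := congrArg (coeff n) hode
  rw [← map_natCast (C (R := ℤ)), coeff_C_mul, coeff_dyadicWeightSeries_mul] at this
  rw [← this]
  rcases n with _ | n
  · simp
  · rw [coeff_succ_X_mul, coeff_derivative]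
    push_cast
    ring

end ThueMorse

section EvalG

open Polynomial
open scoped Nat

theorem eval_g (m n : ℕ) :
    (g n).eval (m : ℤ) = n ! * PowerSeries.coeff n (thueMorseSeries ^ m) := by
  induction n using Nat.strong_induction_on with
  | _ n ih =>
  rcases n with _ | n
  · simp [g, thueMorseSeries, thueMorseSign_zero]
  rw [g, eval_mul, eval_X, eval_finsetSum, sum_attach (range (n + 1)) (fun k => (C
        ((1 - 2 ^ (padicValNat 2 (n + 1 - k) + 1)) * ((n ! / k ! : ℕ) : ℤ)) * g k).eval (m : ℤ))]
  have hterm (k : ℕ) (hk : k ∈ range (n + 1)) : (C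
        ((1 - 2 ^ (padicValNat 2 (n + 1 - k) + 1)) * ((n ! / k ! : ℕ) : ℤ)) * g k).eval (m : ℤ) =
      n ! * (dyadicWeight (n + 1 - k) * PowerSeries.coeff k (thueMorseSeries ^ m)) := by
    have hdiv : ((n ! / k ! : ℕ) : ℤ) * k ! = n ! := by
      exact_mod_cast Nat.div_mul_cancel (Nat.factorial_dvd_factorial (by simpa using hk))
    rw [eval_mul, eval_C, ih k (by simpa using hk), dyadicWeight]
    linear_combination (1 - 2 ^ (padicValNat 2 (n + 1 - k) + 1)) *
      PowerSeries.coeff k (thueMorseSeries ^ m) * hdiv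
  have hrec := natCast_mul_coeff_pow_thueMorseSeries m (n + 1)
  rw [sum_congr rfl hterm, ← mul_sum, Nat.factorial_succ]
  push_cast at hrec ⊢
  linear_combination (n ! : ℤ) * hrec.symm

theorem g_eq_powCoeffPoly (n : ℕ) : g n = powCoeffPoly thueMorseSeries n :=
  eq_of_infinite_eval_eq _ _ <| Set.infinite_of_injective_forall_mem Nat.cast_injective fun m => by
    simp only [Set.mem_ofPred_eq, eval_g, eval_powCoeffPoly constantCoeff_thueMorseSeries]

end EvalG

theorem stmt1 (p : ℕ) (hp : p.Prime) (n : ℕ) :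
    (g n).map (Int.castRingHom (ZMod p)) =
      (g (n % p)).map (Int.castRingHom (ZMod p)) *
        (Polynomial.X - Polynomial.X ^ p) ^ (n / p) := by
  have := Fact.mk hp
  conv_lhs => rw [← Nat.div_add_mod' n p]
  rw [g_eq_powCoeffPoly, g_eq_powCoeffPoly,
    map_powCoeffPoly_mul_add constantCoeff_thueMorseSeries _ (Nat.mod_lt n hp.pos),
    coeff_one_thueMorseSeries, mul_comm]
  congr 2
  simp
end

section
/- For every n ∈ ℕ one has t_3(4n+2) = 8·t_3(n-1) and t_3(4n+3) = 8·t_3(n), where t_3(-1) is set to 0. -/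
/-- The generating function `T(x) = ∑ (-1)^{s₂(n)} xⁿ = ∏ (1 - x^{2^j})`
of the Prouhet–Thue–Morse sequence. -/
noncomputable def T : PowerSeries ℤ :=
  PowerSeries.mk fun n => (-1) ^ (Nat.digits 2 n).sum

/-- `tE m x` is the coefficient of `x`-th power in `T(x)^m`, extended by `0`
for negative indices. -/
noncomputable def tE (m : ℕ) (x : ℤ) : ℤ :=
  if x < 0 then 0 else PowerSeries.coeff x.toNat (T ^ m)

/-!
`T(x) = (1 - x) T(x²)`, hence `T³ = (1 - x)³ T³(x²)`. Comparing coefficients, with the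
coefficients extended by zero to negative indices, gives `t₃(2k) = t₃(k) + 3 t₃(k - 1)` and
`t₃(2k + 1) = -3 t₃(k) - t₃(k - 1)` for every `k ∈ ℤ`. Applying these twice to
`4n + 2 = 2(2n + 1)` and `4n + 3 = 2(2n + 1) + 1` gives both identities.
-/

open PowerSeries

theorem Nat.digits_two_sum_two_mul (m : ℕ) :
    (Nat.digits 2 (2 * m)).sum = (Nat.digits 2 m).sum := by
  rcases m.eq_zero_or_pos with rfl | hm
  · simp
  rw [Nat.digits_def' (by norm_num) (by omega), Nat.mul_mod_right,
    Nat.mul_div_cancel_left _ two_pos, List.sum_cons, zero_add]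

theorem Nat.digits_two_sum_two_mul_add_one (m : ℕ) :
    (Nat.digits 2 (2 * m + 1)).sum = (Nat.digits 2 m).sum + 1 := by
  rw [Nat.digits_def' (by norm_num) (by omega), List.sum_cons,
    show (2 * m + 1) % 2 = 1 by omega, show (2 * m + 1) / 2 = m by omega, add_comm]

theorem T_eq_one_sub_X_mul_expand : T = (1 - X) * expand 2 two_ne_zero T := by
  ext n
  rw [sub_mul, one_mul, map_sub]
  obtain ⟨m, rfl | rfl⟩ := Nat.even_or_odd' n
  · rcases m with _ | m
    · simp [T, coeff_zero_eq_constantCoeff]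
    rw [show 2 * (m + 1) = 2 * m + 1 + 1 by ring, coeff_succ_X_mul,
      coeff_expand_of_not_dvd (m := 2 * m + 1) _ _ _ (by omega), sub_zero,
      show 2 * m + 1 + 1 = 2 * (m + 1) by ring, coeff_expand_mul]
    simp only [T, coeff_mk, Nat.digits_two_sum_two_mul]
  · rw [coeff_succ_X_mul, coeff_expand_mul, coeff_expand_of_not_dvd _ _ _ (by omega)]
    simp only [T, coeff_mk, Nat.digits_two_sum_two_mul_add_one, pow_succ]
    ring

namespace PowerSeries

variable {R : Type*} [CommRing R]

noncomputable def intCoeff (x : ℤ) : R⟦X⟧ →ₗ[R] R :=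
  if x < 0 then 0 else coeff x.toNat

theorem intCoeff_natCast (n : ℕ) : intCoeff (R := R) n = coeff n := by
  rw [intCoeff, if_neg (by omega), Int.toNat_natCast]

theorem intCoeff_of_neg {x : ℤ} (hx : x < 0) (F : R⟦X⟧) : intCoeff x F = 0 := by
  rw [intCoeff, if_pos hx, LinearMap.zero_apply]

theorem intCoeff_X_mul (x : ℤ) (F : R⟦X⟧) : intCoeff x (X * F) = intCoeff (x - 1) F := by
  rcases lt_or_ge x 1 with hx | hx
  · rw [intCoeff_of_neg (by omega : x - 1 < 0)]
    rcases lt_or_ge x 0 with hx0 | hx0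
    · rw [intCoeff_of_neg hx0]
    · obtain rfl : x = 0 := by omega
      rw [← Nat.cast_zero, intCoeff_natCast, coeff_zero_X_mul]
  · obtain ⟨n, rfl⟩ : ∃ n : ℕ, x = (n + 1 : ℕ) := ⟨(x - 1).toNat, by omega⟩
    rw [Nat.cast_succ, add_sub_cancel_right, ← Nat.cast_succ, intCoeff_natCast, intCoeff_natCast,
      coeff_succ_X_mul]

theorem intCoeff_expand_two_mul (k : ℤ) (F : R⟦X⟧) :
    intCoeff (2 * k) (expand 2 two_ne_zero F) = intCoeff k F := by
  rcases lt_or_ge k 0 with hk | hk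
  · rw [intCoeff_of_neg hk, intCoeff_of_neg (by omega)]
  · lift k to ℕ using hk
    rw [← Nat.cast_ofNat, ← Nat.cast_mul, intCoeff_natCast, intCoeff_natCast, coeff_expand_mul]

theorem intCoeff_expand_two_mul_add_one (k : ℤ) (F : R⟦X⟧) :
    intCoeff (2 * k + 1) (expand 2 two_ne_zero F) = 0 := by
  rcases lt_or_ge k 0 with hk | hk
  · rw [intCoeff_of_neg (by omega)]
  · lift k to ℕ using hk
    rw [← Nat.cast_ofNat, ← Nat.cast_mul, ← Nat.cast_succ, intCoeff_natCast,
      coeff_expand_of_not_dvd _ _ _ (by omega)]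

theorem intCoeff_one_sub_X_pow_three_mul (x : ℤ) (F : R⟦X⟧) :
    intCoeff x ((1 - X) ^ 3 * F) =
      intCoeff x F - 3 * intCoeff (x - 1) F + 3 * intCoeff (x - 2) F - intCoeff (x - 3) F := by
  have h : (1 - X) ^ 3 * F =
      F - (3 : R) • (X * F) + (3 : R) • (X * (X * F)) - X * (X * (X * F)) := by
    simp only [smul_eq_C_mul, map_ofNat]; ring
  simp only [h, map_sub, map_add, map_smul, intCoeff_X_mul, smul_eq_mul]
  ring_nf

theorem intCoeff_one_sub_X_pow_three_mul_expand_two_mul (k : ℤ) (F : R⟦X⟧) :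
    intCoeff (2 * k) ((1 - X) ^ 3 * expand 2 two_ne_zero F) =
      intCoeff k F + 3 * intCoeff (k - 1) F := by
  rw [intCoeff_one_sub_X_pow_three_mul, show 2 * k - 1 = 2 * (k - 1) + 1 by ring,
    show 2 * k - 2 = 2 * (k - 1) by ring, show 2 * k - 3 = 2 * (k - 2) + 1 by ring]
  simp only [intCoeff_expand_two_mul, intCoeff_expand_two_mul_add_one]
  ring

theorem intCoeff_one_sub_X_pow_three_mul_expand_two_mul_add_one (k : ℤ) (F : R⟦X⟧) :
    intCoeff (2 * k + 1) ((1 - X) ^ 3 * expand 2 two_ne_zero F) =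
      -3 * intCoeff k F - intCoeff (k - 1) F := by
  rw [intCoeff_one_sub_X_pow_three_mul, show 2 * k + 1 - 1 = 2 * k by ring,
    show 2 * k + 1 - 2 = 2 * (k - 1) + 1 by ring, show 2 * k + 1 - 3 = 2 * (k - 1) by ring]
  simp only [intCoeff_expand_two_mul, intCoeff_expand_two_mul_add_one]
  ring

end PowerSeries

theorem tE_eq_intCoeff (m : ℕ) (x : ℤ) : tE m x = intCoeff x (T ^ m) := by
  unfold tE intCoeff
  split_ifs <;> rfl

theorem tE_natCast (m n : ℕ) : tE m n = coeff n (T ^ m) := by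
  rw [tE_eq_intCoeff, intCoeff_natCast]

theorem T_pow_eq_one_sub_X_pow_mul_expand (m : ℕ) :
    T ^ m = (1 - X) ^ m * expand 2 two_ne_zero (T ^ m) := by
  conv_lhs => rw [T_eq_one_sub_X_mul_expand]
  rw [mul_pow, map_pow]

theorem tE_three_two_mul (k : ℤ) : tE 3 (2 * k) = tE 3 k + 3 * tE 3 (k - 1) := by
  rw [tE_eq_intCoeff, T_pow_eq_one_sub_X_pow_mul_expand,
    intCoeff_one_sub_X_pow_three_mul_expand_two_mul, ← tE_eq_intCoeff, ← tE_eq_intCoeff]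

theorem tE_three_two_mul_add_one (k : ℤ) : tE 3 (2 * k + 1) = -3 * tE 3 k - tE 3 (k - 1) := by
  rw [tE_eq_intCoeff, T_pow_eq_one_sub_X_pow_mul_expand,
    intCoeff_one_sub_X_pow_three_mul_expand_two_mul_add_one, ← tE_eq_intCoeff, ← tE_eq_intCoeff]

theorem tE_three_four_mul_add_two (n : ℤ) : tE 3 (4 * n + 2) = 8 * tE 3 (n - 1) := by
  rw [show 4 * n + 2 = 2 * (2 * n + 1) by ring, tE_three_two_mul, tE_three_two_mul_add_one,
    add_sub_cancel_right, tE_three_two_mul]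
  ring

theorem tE_three_four_mul_add_three (n : ℤ) : tE 3 (4 * n + 3) = 8 * tE 3 n := by
  rw [show 4 * n + 3 = 2 * (2 * n + 1) + 1 by ring, tE_three_two_mul_add_one,
    tE_three_two_mul_add_one, add_sub_cancel_right, tE_three_two_mul]
  ring

theorem stmt5 (n : ℕ) :
    PowerSeries.coeff (4 * n + 2) (T ^ 3) = 8 * tE 3 ((n : ℤ) - 1) ∧
    PowerSeries.coeff (4 * n + 3) (T ^ 3) = 8 * PowerSeries.coeff n (T ^ 3) := by
  simp only [← tE_natCast, Nat.cast_add, Nat.cast_mul, Nat.cast_ofNat]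
  exact ⟨tE_three_four_mul_add_two n, tE_three_four_mul_add_three n⟩
end
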